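/- Let γ(u,t) be a one-parameter family of smooth pseudo null curves in E⁴₁ with speed v = ‖∂γ/∂u‖, pseudo null Frenet frame {T, N, B₁, B₂} with curvatures k₁ = 1, k₂, k₃, and flow ∂γ/∂t = α₁T + α₂N + α₃B₁ + α₄B₂. Then the speed evolves by ∂v/∂t = ∂α₁/∂u − α₄ v. -/

import Mathlib

/-!
Formalization of inextensible flows of partially null / pseudo null curves in
Minkowski space-time `E⁴₁` (ℝ⁴ with signature (-,+,+,+)).
-/

noncomputable section

/-- The Minkowski bilinear form on `ℝ⁴` with signature `(-,+,+,+)`. -/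
def mink (v w : Fin 4 → ℝ) : ℝ :=
  -(v 0 * w 0) + v 1 * w 1 + v 2 * w 2 + v 3 * w 3

/-- The Minkowski norm `‖v‖ = √|⟨v,v⟩|`. -/
def mnorm (v : Fin 4 → ℝ) : ℝ := Real.sqrt |mink v v|

/-!
Since `∂γ/∂u = v T` and `⟨T, T⟩ = 1`, the speed is `v = ⟨T, ∂γ/∂u⟩`, and likewise the flow gives
`α₁ = ⟨T, ∂γ/∂t⟩`. Differentiating the first in `t` and the second in `u`, the mixed partials of `γ`
cancel and `∂v/∂t - ∂α₁/∂u = ⟨∂T/∂t, v T⟩ - ⟨∂T/∂u, ∂γ/∂t⟩`. The first term vanishes because `T`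
has constant length, and by the Frenet equation `∂T/∂u = v N` the second is `v ⟨N, ∂γ/∂t⟩ = v α₄`.
-/

section MixedPartials

variable {E : Type*} [NormedAddCommGroup E] [NormedSpace ℝ E]

theorem HasFDerivAt.hasDerivAt_partial_fst {F : ℝ × ℝ → E} {F' : ℝ × ℝ →L[ℝ] E} {u t : ℝ}
    (hF : HasFDerivAt F F' (u, t)) : HasDerivAt (fun x => F (x, t)) (F' (1, 0)) u :=
  hF.comp_hasDerivAt u ((hasDerivAt_id u).prodMk (hasDerivAt_const u t))

theorem HasFDerivAt.hasDerivAt_partial_snd {F : ℝ × ℝ → E} {F' : ℝ × ℝ →L[ℝ] E} {u t : ℝ}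
    (hF : HasFDerivAt F F' (u, t)) : HasDerivAt (fun τ => F (u, τ)) (F' (0, 1)) t :=
  hF.comp_hasDerivAt t ((hasDerivAt_const t u).prodMk (hasDerivAt_id t))

theorem exists_hasDerivAt_mixed_partials {F : ℝ → ℝ → E}
    (hF : ContDiff ℝ 2 (fun p : ℝ × ℝ => F p.1 p.2)) (u t : ℝ) :
    ∃ m : E, HasDerivAt (fun τ => deriv (fun x => F x τ) u) m t ∧
      HasDerivAt (fun x => deriv (fun τ => F x τ) t) m u := by
  set G : ℝ × ℝ → E := fun p => F p.1 p.2
  have hG : Differentiable ℝ G := hF.differentiable two_ne_zero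
  have hG' : Differentiable ℝ (fderiv ℝ G) :=
    (hF.fderiv_right (m := 1) le_rfl).differentiable one_ne_zero
  have hfst : ∀ x τ, deriv (fun y => F y τ) x = fderiv ℝ G (x, τ) (1, 0) := fun x τ =>
    (hG (x, τ)).hasFDerivAt.hasDerivAt_partial_fst.deriv
  have hsnd : ∀ x τ, deriv (fun σ => F x σ) τ = fderiv ℝ G (x, τ) (0, 1) := fun x τ =>
    (hG (x, τ)).hasFDerivAt.hasDerivAt_partial_snd.deriv
  have hsymm : IsSymmSndFDerivAt ℝ G (u, t) := hF.contDiffAt.isSymmSndFDerivAt (by simp)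
  refine ⟨fderiv ℝ (fderiv ℝ G) (u, t) (0, 1) (1, 0), ?_, ?_⟩
  · simp only [hfst]
    simpa using (hG' (u, t)).hasFDerivAt.hasDerivAt_partial_snd.clm_apply
      (hasDerivAt_const t ((1 : ℝ), (0 : ℝ)))
  · simp only [hsnd]
    rw [hsymm.eq]
    simpa using (hG' (u, t)).hasFDerivAt.hasDerivAt_partial_fst.clm_apply
      (hasDerivAt_const u ((0 : ℝ), (1 : ℝ)))

end MixedPartials

section Minkowski

theorem mink_comm (a b : Fin 4 → ℝ) : mink a b = mink b a := by
  unfold mink; ring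

theorem mink_add_right (a b c : Fin 4 → ℝ) : mink a (b + c) = mink a b + mink a c := by
  simp only [mink, Pi.add_apply]; ring

theorem mink_smul_right (r : ℝ) (a b : Fin 4 → ℝ) : mink a (r • b) = r * mink a b := by
  simp only [mink, Pi.smul_apply, smul_eq_mul]; ring

theorem mink_smul_left (r : ℝ) (a b : Fin 4 → ℝ) : mink (r • a) b = r * mink a b := by
  rw [mink_comm, mink_smul_right, mink_comm]

theorem HasDerivAt.mink {f g : ℝ → Fin 4 → ℝ} {f' g' : Fin 4 → ℝ} {t : ℝ}
    (hf : HasDerivAt f f' t) (hg : HasDerivAt g g' t) :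
    HasDerivAt (fun τ => mink (f τ) (g τ)) (mink f' (g t) + mink (f t) g') t := by
  have hfi := hasDerivAt_pi.1 hf
  have hgi := hasDerivAt_pi.1 hg
  exact ((((hfi 0).mul (hgi 0)).neg.add ((hfi 1).mul (hgi 1))).add
    ((hfi 2).mul (hgi 2))).add ((hfi 3).mul (hgi 3)) |>.congr_deriv (by unfold _root_.mink; ring)

theorem mink_deriv_eq_zero_of_mink_self_const {f : ℝ → Fin 4 → ℝ} {f' : Fin 4 → ℝ}
    {c t : ℝ} (hf : HasDerivAt f f' t) (hc : ∀ τ, mink (f τ) (f τ) = c) : mink (f t) f' = 0 := by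
  have hzero := (hf.mink hf).unique ((hasDerivAt_const t c).congr_of_eventuallyEq (.of_forall hc))
  rw [mink_comm] at hzero
  linarith

variable {T N B₁ B₂ : Fin 4 → ℝ}

theorem mink_frame_first_coeff (a b c d : ℝ) (hTT : mink T T = 1) (hTN : mink T N = 0)
    (hTB₁ : mink T B₁ = 0) (hTB₂ : mink T B₂ = 0) :
    mink T (a • T + b • N + c • B₁ + d • B₂) = a := by
  simp only [mink_add_right, mink_smul_right, hTT, hTN, hTB₁, hTB₂]; ring

theorem mink_pseudoNull_frame_last_coeff (a b c d : ℝ) (hTN : mink T N = 0) (hNN : mink N N = 0)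
    (hNB₁ : mink N B₁ = 0) (hNB₂ : mink N B₂ = 1) :
    mink N (a • T + b • N + c • B₁ + d • B₂) = d := by
  simp only [mink_add_right, mink_smul_right, mink_comm N T, hTN, hNN, hNB₁, hNB₂]; ring

end Minkowski

theorem speed_evolution_pseudo_null_general
    (γ T N B₁ B₂ : ℝ → ℝ → (Fin 4 → ℝ))
    (v k₁ α₁ α₂ α₃ α₄ : ℝ → ℝ → ℝ)
    (hγsmooth : ContDiff ℝ (⊤ : ℕ∞) (fun p : ℝ × ℝ => γ p.1 p.2))
    (hTsmooth : ContDiff ℝ (⊤ : ℕ∞) (fun p : ℝ × ℝ => T p.1 p.2))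
    (hTT : ∀ u t : ℝ, mink (T u t) (T u t) = 1)
    (hNN : ∀ u t : ℝ, mink (N u t) (N u t) = 0)
    (hNB₂ : ∀ u t : ℝ, mink (N u t) (B₂ u t) = 1)
    (hTN : ∀ u t : ℝ, mink (T u t) (N u t) = 0)
    (hTB₁ : ∀ u t : ℝ, mink (T u t) (B₁ u t) = 0)
    (hTB₂ : ∀ u t : ℝ, mink (T u t) (B₂ u t) = 0)
    (hNB₁ : ∀ u t : ℝ, mink (N u t) (B₁ u t) = 0)
    -- speed, tangent and pseudo null Frenet equations (∂/∂s = (1/v)∂/∂u, k₁ = 1)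
    (hk₁ : ∀ u t : ℝ, k₁ u t = 1)
    (hT : ∀ u t : ℝ, deriv (fun x => γ x t) u = v u t • T u t)
    (hfr₁ : ∀ u t : ℝ, deriv (fun x => T x t) u = (v u t * k₁ u t) • N u t)
    (hflow : ∀ u t : ℝ, deriv (fun x => γ u x) t =
      α₁ u t • T u t + α₂ u t • N u t + α₃ u t • B₁ u t + α₄ u t • B₂ u t) :
    ∀ u t : ℝ, deriv (fun x => v u x) t =
      deriv (fun x => α₁ x t) u - α₄ u t * v u t := by
  intro u t
  have hv : ∀ τ, v u τ = mink (T u τ) (deriv (fun x => γ x τ) u) := fun τ => by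
    rw [hT, mink_smul_right, hTT, mul_one]
  have hα₁ : ∀ x, α₁ x t = mink (T x t) (deriv (fun τ => γ x τ) t) := fun x => by
    rw [hflow, mink_frame_first_coeff _ _ _ _ (hTT x t) (hTN x t) (hTB₁ x t) (hTB₂ x t)]
  have hTdiff : Differentiable ℝ (fun p : ℝ × ℝ => T p.1 p.2) := hTsmooth.differentiable (by simp)
  have hTt : HasDerivAt (fun τ => T u τ) _ t := (hTdiff (u, t)).hasFDerivAt.hasDerivAt_partial_snd
  have hTu : HasDerivAt (fun x => T x t) _ u := (hTdiff (u, t)).hasFDerivAt.hasDerivAt_partial_fst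
  rw [← hTu.deriv, hfr₁, hk₁, mul_one] at hTu
  obtain ⟨m, hγut, hγtu⟩ := exists_hasDerivAt_mixed_partials (hγsmooth.of_le (by norm_cast)) u t
  have hvt := hTt.mink hγut
  have hα₁u := hTu.mink hγtu
  simp only [← hv, ← hα₁] at hvt hα₁u
  rw [hvt.deriv, hα₁u.deriv, mink_smul_left, hflow,
    mink_pseudoNull_frame_last_coeff _ _ _ _ (hTN u t) (hNN u t) (hNB₁ u t) (hNB₂ u t), hT,
    mink_smul_right, mink_comm, mink_deriv_eq_zero_of_mink_self_const hTt (hTT u)]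
  ring

theorem speed_evolution_pseudo_null
    (γ T N B₁ B₂ : ℝ → ℝ → (Fin 4 → ℝ))
    (v k₁ k₂ k₃ α₁ α₂ α₃ α₄ : ℝ → ℝ → ℝ)
    (hγsmooth : ContDiff ℝ (⊤ : ℕ∞) (fun p : ℝ × ℝ => γ p.1 p.2))
    (hTsmooth : ContDiff ℝ (⊤ : ℕ∞) (fun p : ℝ × ℝ => T p.1 p.2))
    (hNsmooth : ContDiff ℝ (⊤ : ℕ∞) (fun p : ℝ × ℝ => N p.1 p.2))
    (hB₁smooth : ContDiff ℝ (⊤ : ℕ∞) (fun p : ℝ × ℝ => B₁ p.1 p.2))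
    (hB₂smooth : ContDiff ℝ (⊤ : ℕ∞) (fun p : ℝ × ℝ => B₂ p.1 p.2))
    (hk₂smooth : ContDiff ℝ (⊤ : ℕ∞) (fun p : ℝ × ℝ => k₂ p.1 p.2))
    (hk₃smooth : ContDiff ℝ (⊤ : ℕ∞) (fun p : ℝ × ℝ => k₃ p.1 p.2))
    (hα₁smooth : ContDiff ℝ (⊤ : ℕ∞) (fun p : ℝ × ℝ => α₁ p.1 p.2))
    (hα₂smooth : ContDiff ℝ (⊤ : ℕ∞) (fun p : ℝ × ℝ => α₂ p.1 p.2))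
    (hα₃smooth : ContDiff ℝ (⊤ : ℕ∞) (fun p : ℝ × ℝ => α₃ p.1 p.2))
    (hα₄smooth : ContDiff ℝ (⊤ : ℕ∞) (fun p : ℝ × ℝ => α₄ p.1 p.2))
    (hTT : ∀ u t : ℝ, mink (T u t) (T u t) = 1)
    (hB₁B₁ : ∀ u t : ℝ, mink (B₁ u t) (B₁ u t) = 1)
    (hNN : ∀ u t : ℝ, mink (N u t) (N u t) = 0)
    (hB₂B₂ : ∀ u t : ℝ, mink (B₂ u t) (B₂ u t) = 0)
    (hNB₂ : ∀ u t : ℝ, mink (N u t) (B₂ u t) = 1)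
    (hTN : ∀ u t : ℝ, mink (T u t) (N u t) = 0)
    (hTB₁ : ∀ u t : ℝ, mink (T u t) (B₁ u t) = 0)
    (hTB₂ : ∀ u t : ℝ, mink (T u t) (B₂ u t) = 0)
    (hNB₁ : ∀ u t : ℝ, mink (N u t) (B₁ u t) = 0)
    (hB₁B₂ : ∀ u t : ℝ, mink (B₁ u t) (B₂ u t) = 0)
    -- speed, tangent and pseudo null Frenet equations (∂/∂s = (1/v)∂/∂u, k₁ = 1)
    (hk₁ : ∀ u t : ℝ, k₁ u t = 1)
    (hv : ∀ u t : ℝ, v u t = mnorm (deriv (fun x => γ x t) u))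
    (hvpos : ∀ u t : ℝ, 0 < v u t)
    (hT : ∀ u t : ℝ, deriv (fun x => γ x t) u = v u t • T u t)
    (hfr₁ : ∀ u t : ℝ, deriv (fun x => T x t) u = (v u t * k₁ u t) • N u t)
    (hfr₂ : ∀ u t : ℝ, deriv (fun x => N x t) u = (v u t * k₂ u t) • B₁ u t)
    (hfr₃ : ∀ u t : ℝ, deriv (fun x => B₁ x t) u =
      (v u t * k₃ u t) • N u t - (v u t * k₂ u t) • B₂ u t)
    (hfr₄ : ∀ u t : ℝ, deriv (fun x => B₂ x t) u =
      (v u t * -(k₁ u t)) • T u t - (v u t * k₃ u t) • B₁ u t)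
    (hflow : ∀ u t : ℝ, deriv (fun x => γ u x) t =
      α₁ u t • T u t + α₂ u t • N u t + α₃ u t • B₁ u t + α₄ u t • B₂ u t) :
    ∀ u t : ℝ, deriv (fun x => v u x) t =
      deriv (fun x => α₁ x t) u - α₄ u t * v u t :=
  speed_evolution_pseudo_null_general γ T N B₁ B₂ v k₁ α₁ α₂ α₃ α₄ hγsmooth hTsmooth hTT hNN hNB₂
    hTN hTB₁ hTB₂ hNB₁ hk₁ hT hfr₁ hflow
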